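/- arXiv:1201.4140 — 2 statements merged into one kernel-verified Lean document; each statement's English description precedes it below -/
import Mathlib

section
/- Let n and h be positive integers with h ∣ n and h ∣ 24. Then the map ρ_{n|h} : Γ₀(n) → ℂˣ sending the matrix (a b; c d) to exp(−2πi·c·d/(n·h)) is a group homomorphism, i.e. ρ_{n|h}(γγ') = ρ_{n|h}(γ)·ρ_{n|h}(γ') for all γ, γ' ∈ Γ₀(n) and ρ_{n|h} maps the identity matrix to 1. -/
/-!
With `γ = (a b; c d)`, `γ' = (a' b'; c' d')` and `a'd' - b'c' = 1`, the lower row of `γγ'` satisfies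
`c''d'' - cd - c'd' = c²a'b' + 2cdb'c' + c'd'(d² - 1)`.
The first two terms are divisible by `n²`, and the last by `n·h` because `d` is a unit modulo
`h ∣ 24` and every unit of `ℤ/24` squares to `1`. Hence `cd/(nh)` is additive modulo `ℤ`.
-/

/-- The function `ρ_{n|h}` on `Γ₀(n)` sending `(a b; c d)` to `exp(-2πi·c·d/(n·h))`. -/
noncomputable def rhoChar (n h : ℕ) (γ : CongruenceSubgroup.Gamma0 n) : ℂ :=
  Complex.exp (-2 * Real.pi * Complex.I *
      ((((γ : Matrix.SpecialLinearGroup (Fin 2) ℤ) 1 0 : ℤ) : ℂ) *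
        (((γ : Matrix.SpecialLinearGroup (Fin 2) ℤ) 1 1 : ℤ) : ℂ)) /
    ((n : ℂ) * (h : ℂ)))

open Matrix.SpecialLinearGroup CongruenceSubgroup Complex Real

open scoped MatrixGroups

theorem ZMod.units_sq_eq_one_of_dvd_24 {h : ℕ} (h24 : h ∣ 24) (u : (ZMod h)ˣ) : u ^ 2 = 1 := by
  obtain ⟨v, rfl⟩ := ZMod.unitsMap_surjective h24 u
  rw [← map_pow, (by decide : ∀ w : (ZMod 24)ˣ, w ^ 2 = 1) v, map_one]

theorem Int.dvd_sq_sub_one_of_dvd_24 {h : ℕ} (h24 : h ∣ 24) {d : ℤ} (hd : IsCoprime (h : ℤ) d) :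
    (h : ℤ) ∣ d ^ 2 - 1 := by
  have := congrArg Units.val (ZMod.units_sq_eq_one_of_dvd_24 h24 (ZMod.unitOfIsCoprime d hd.symm))
  rw [← ZMod.intCast_zmod_eq_zero_iff_dvd, Int.cast_sub, Int.cast_pow, Int.cast_one, sub_eq_zero]
  simpa using this

theorem CongruenceSubgroup.Gamma0_mem_iff_dvd {N : ℕ} {A : SL(2, ℤ)} :
    A ∈ Gamma0 N ↔ (N : ℤ) ∣ A 1 0 :=
  Gamma0_mem.trans (ZMod.intCast_zmod_eq_zero_iff_dvd _ _)

theorem dvd_lowerRow_mul_sub {n h : ℤ} (A B : SL(2, ℤ)) (hhn : h ∣ n) (hA : n ∣ A 1 0)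
    (hB : n ∣ B 1 0) (hd : h ∣ A 1 1 ^ 2 - 1) :
    n * h ∣ (A * B) 1 0 * (A * B) 1 1 - A 1 0 * A 1 1 - B 1 0 * B 1 1 := by
  have hmul (i j : Fin 2) : (A * B) i j = A i 0 * B 0 j + A i 1 * B 1 j := by
    simp [coe_mul, Matrix.mul_apply, Fin.sum_univ_two]
  have hdetB : B 0 0 * B 1 1 - B 0 1 * B 1 0 = 1 := by
    rw [← Matrix.det_fin_two, det_coe]
  have key : (A * B) 1 0 * (A * B) 1 1 - A 1 0 * A 1 1 - B 1 0 * B 1 1 =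
      A 1 0 * A 1 0 * (B 0 0 * B 0 1) + 2 * A 1 1 * B 0 1 * (A 1 0 * B 1 0)
        + B 1 0 * (A 1 1 ^ 2 - 1) * B 1 1 := by
    rw [hmul, hmul]
    linear_combination A 1 0 * A 1 1 * hdetB
  have hnh : n * h ∣ n * n := mul_dvd_mul_left n hhn
  rw [key]
  exact dvd_add (dvd_add ((hnh.trans (mul_dvd_mul hA hA)).mul_right _)
    ((hnh.trans (mul_dvd_mul hA hB)).mul_left _)) ((mul_dvd_mul hB hd).mul_right _)

theorem exp_div_eq_mul_of_dvd_sub {N x y z : ℤ} (hN : N ∣ x - y - z) :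
    cexp (-2 * π * I * x / N) = cexp (-2 * π * I * y / N) * cexp (-2 * π * I * z / N) := by
  rw [← Complex.exp_add]
  rcases eq_or_ne N 0 with rfl | hN0
  · simp
  obtain ⟨k, hk⟩ := hN
  have hx : (x : ℂ) = y + z + N * k := by exact_mod_cast (by linarith : x = y + z + N * k)
  rw [Complex.exp_eq_exp_iff_exists_int]
  refine ⟨-k, ?_⟩
  rw [hx]
  field_simp
  push_cast
  ring

theorem rhoChar_eq_exp (n h : ℕ) (γ : Gamma0 n) :
    rhoChar n h γ = cexp (-2 * π * I * (((γ : SL(2, ℤ)) 1 0 * (γ : SL(2, ℤ)) 1 1 : ℤ) : ℂ) /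
      ((n * h : ℤ) : ℂ)) := by
  simp only [rhoChar, Int.cast_mul, Int.cast_natCast]

theorem stmt_5_general (n h : ℕ) (hdvd : h ∣ n) (h24 : h ∣ 24) :
    (∀ γ γ' : CongruenceSubgroup.Gamma0 n,
      rhoChar n h (γ * γ') = rhoChar n h γ * rhoChar n h γ') ∧
    rhoChar n h 1 = 1 := by
  refine ⟨fun γ γ' => ?_, by simp [rhoChar]⟩
  have hhn : (h : ℤ) ∣ n := Int.natCast_dvd_natCast.2 hdvd
  have hc := Gamma0_mem_iff_dvd.1 γ.2
  have hd : (h : ℤ) ∣ (γ : SL(2, ℤ)) 1 1 ^ 2 - 1 :=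
    Int.dvd_sq_sub_one_of_dvd_24 h24 ((isCoprime_row _ 1).of_isCoprime_of_dvd_left (hhn.trans hc))
  simp only [rhoChar_eq_exp]
  exact exp_div_eq_mul_of_dvd_sub (dvd_lowerRow_mul_sub _ _ hhn hc (Gamma0_mem_iff_dvd.1 γ'.2) hd)

/-- For positive integers `n`, `h` with `h ∣ n` and `h ∣ 24`, the map
`ρ_{n|h} : Γ₀(n) → ℂˣ`, `(a b; c d) ↦ exp(-2πi·c·d/(n·h))`, is a group homomorphism. -/
theorem stmt_5 (n h : ℕ) (hn : 0 < n) (hh : 0 < h) (hdvd : h ∣ n) (h24 : h ∣ 24) :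
    (∀ γ γ' : CongruenceSubgroup.Gamma0 n,
      rhoChar n h (γ * γ') = rhoChar n h γ * rhoChar n h γ') ∧
    rhoChar n h 1 = 1 :=
  stmt_5_general n h hdvd h24
end

section
/- Let w be a real number with w > 0 and let f : ℍ → ℂ be holomorphic on the upper half-plane ℍ with sup_{τ∈ℍ} (Im τ)^{(2−w)/2}·|f(τ)| < ∞. For τ = x + iy ∈ ℍ define g*(τ) = (4i)^{w−1} ∫₀^∞ (i(t+2y))^{−w} · conj(f(τ+it)) · i dt, using the principal branch of complex powers (this is the non-holomorphic period integral (4i)^{w−1}∫_{−conj(τ)}^{∞}(z+τ)^{−w} conj(f(−conj(z))) dz along the vertical path z = −conj(τ) + it). Then for every τ ∈ ℍ the integral converges absolutely, g* is real-differentiable on ℍ, and its Wirtinger derivative satisfies (∂g*/∂τ̄)(τ) := ½(∂/∂x + i·∂/∂y)g*(τ) = (4i)^{w−1}·(2iy)^{−w}· conj(f(τ)). In particular, for any holomorphic h : ℍ → ℂ the completion ĥ = h + g* satisfies (∂ĥ/∂τ̄)(τ) = (4i)^{w−1}(2i·Im τ)^{−w}· conj(f(τ)), so ∂ĥ/∂τ̄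 is, up to the explicit nonzero factor (4i)^{w−1}(2i·Im τ)^{−w}, the complex conjugate of the shadow f. -/
/-!
Write `u = I (t + 2 Im τ) = (τ + I t) - conj τ`. The integrand `u ^ (-w) · conj (f (τ + I t)) · I`
is a holomorphic function of `u` times an antiholomorphic function of `τ + I t`, and each factor
satisfies `∂/∂τ̄ = I ∂/∂t` (since `∂u/∂τ̄ = -1`, `∂u/∂t = I`). The growth bound on `f`, together
with Cauchy's estimate for `f'`, makes the integrand and its `τ`-derivative `O(t ^ (-w/2 - 1))`
locally uniformly in `τ`, so we may differentiate under the integral sign, and the fundamental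
theorem of calculus gives `∂G/∂τ̄ = (4i)^(w-1) · I ∫₀^∞ ∂ₜ(integrand) dt`
`= -(4i)^(w-1) · I · (integrand at t = 0)`.
-/

open MeasureTheory Set Filter Topology Complex Metric ComplexConjugate
open UpperHalfPlane (upperHalfPlaneSet isOpen_upperHalfPlaneSet)

local notation "ℍₒ" => upperHalfPlaneSet

/-- `wirtingerBar (fderiv ℝ F τ)` is the Wirtinger derivative `∂F/∂τ̄` at `τ`. -/
noncomputable def wirtingerBar : (ℂ →L[ℝ] ℂ) →L[ℝ] ℂ :=
  (1 / 2 : ℂ) • (ContinuousLinearMap.apply ℝ ℂ 1 + I • ContinuousLinearMap.apply ℝ ℂ I)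

lemma wirtingerBar_apply (L : ℂ →L[ℝ] ℂ) : wirtingerBar L = 1 / 2 * (L 1 + I * L I) := rfl

lemma wirtingerBar_smul (c : ℂ) (L : ℂ →L[ℝ] ℂ) : wirtingerBar (c • L) = c * wirtingerBar L := by
  simp only [wirtingerBar_apply, smul_apply, smul_eq_mul]
  ring

lemma wirtingerBar_restrictScalars (L : ℂ →L[ℂ] ℂ) : wirtingerBar (L.restrictScalars ℝ) = 0 := by
  have hLI : L I = I * L 1 := by simpa using L.map_smul I 1
  simp only [wirtingerBar_apply, ContinuousLinearMap.coe_restrictScalars', hLI, ← mul_assoc,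
    I_mul_I]
  ring

lemma rpow_le_rpow_add_rpow_of_mem_Icc {a b r : ℝ} (p : ℝ) (ha : 0 < a) (hr : r ∈ Icc a b) :
    r ^ p ≤ a ^ p + b ^ p := by
  have hr₀ : 0 < r := ha.trans_le hr.1
  rcases le_total 0 p with hp | hp
  · linarith [Real.rpow_le_rpow hr₀.le hr.2 hp, Real.rpow_nonneg ha.le p]
  · linarith [Real.rpow_le_rpow_of_nonpos ha hr.1 hp,
      Real.rpow_nonneg (hr₀.le.trans hr.2) p]

lemma norm_le_mul_rpow_neg_of_rpow_mul_norm_le {E : Type*} [SeminormedAddCommGroup E]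
    {x a C : ℝ} {v : E} (hx : 0 < x) (h : x ^ a * ‖v‖ ≤ C) : ‖v‖ ≤ C * x ^ (-a) := by
  rw [Real.rpow_neg hx.le, ← div_eq_mul_inv, le_div_iff₀ (by positivity), mul_comm]
  exact h

lemma nonneg_of_norm_le_mul_im_rpow {f : ℂ → ℂ} {C p : ℝ}
    (hfC : ∀ z : ℂ, 0 < z.im → ‖f z‖ ≤ C * z.im ^ p) : 0 ≤ C := by
  simpa using (norm_nonneg _).trans (hfC I (by simp))

lemma norm_deriv_le_mul_im_rpow {f : ℂ → ℂ} {C p : ℝ} (hf : DifferentiableOn ℂ f ℍₒ)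
    (hfC : ∀ z : ℂ, 0 < z.im → ‖f z‖ ≤ C * z.im ^ p) {z : ℂ} (hz : 0 < z.im) :
    ‖deriv f z‖ ≤ 2 * ((1 / 2) ^ p + (3 / 2) ^ p) * C * z.im ^ (p - 1) := by
  set y := z.im
  have hy : 0 < y / 2 := by positivity
  have hC := nonneg_of_norm_le_mul_im_rpow hfC
  have him : ∀ ζ ∈ closedBall z (y / 2), ζ.im ∈ Icc (y / 2) (3 * y / 2) := by
    intro ζ hζ
    have := (abs_im_le_norm (ζ - z)).trans (mem_closedBall_iff_norm.1 hζ)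
    rw [sub_im, abs_le] at this
    constructor <;> linarith
  have hsphere : ∀ ζ ∈ sphere z (y / 2), ‖f ζ‖ ≤ C * ((y / 2) ^ p + (3 * y / 2) ^ p) := by
    intro ζ hζ
    have hζ' := him ζ (sphere_subset_closedBall hζ)
    calc ‖f ζ‖ ≤ C * ζ.im ^ p := hfC ζ (hy.trans_le hζ'.1)
      _ ≤ _ := by gcongr; exact rpow_le_rpow_add_rpow_of_mem_Icc p hy hζ'
  have hd : DiffContOnCl ℂ f (ball z (y / 2)) :=
    hf.diffContOnCl_ball fun ζ hζ => hy.trans_le (him ζ hζ).1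
  calc ‖deriv f z‖ ≤ C * ((y / 2) ^ p + (3 * y / 2) ^ p) / (y / 2) :=
        norm_deriv_le_of_forall_mem_sphere_norm_le hy hd hsphere
    _ = 2 * ((1 / 2) ^ p + (3 / 2) ^ p) * C * y ^ (p - 1) := by
        rw [show y / 2 = 1 / 2 * y by ring, show 3 * y / 2 = 3 / 2 * y by ring,
          Real.mul_rpow (by norm_num) hz.le, Real.mul_rpow (by norm_num) hz.le,
          Real.rpow_sub_one hz.ne']
        field_simp

/-- The factor `z + τ` of the period integral at the point `z = -conj τ + I t` of the path. -/
def periodArg (τ : ℂ) (t : ℝ) : ℂ := I * ((t : ℂ) + 2 * τ.im)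

section periodArg

variable {τ : ℂ} {t : ℝ}

lemma im_add_I_mul_ofReal (τ : ℂ) (t : ℝ) : (τ + I * t).im = τ.im + t := by simp

lemma add_I_mul_ofReal_mem_upperHalfPlaneSet (hτ : 0 < τ.im) (ht : 0 ≤ t) : τ + I * t ∈ ℍₒ := by
  show 0 < (τ + I * t).im
  rw [im_add_I_mul_ofReal]
  positivity

lemma periodArg_im : (periodArg τ t).im = t + 2 * τ.im := by simp [periodArg]

lemma norm_periodArg (hτ : 0 < τ.im) (ht : 0 ≤ t) : ‖periodArg τ t‖ = t + 2 * τ.im := by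
  rw [periodArg, norm_mul, norm_I, one_mul, ← ofReal_ofNat, ← ofReal_mul, ← ofReal_add,
    Complex.norm_of_nonneg (by positivity)]

lemma periodArg_mem_slitPlane (hτ : 0 < τ.im) (ht : 0 ≤ t) : periodArg τ t ∈ slitPlane :=
  mem_slitPlane_iff.2 <| Or.inr <| by rw [periodArg_im]; positivity

lemma norm_periodArg_cpow_le {e : ℝ} (he : e ≤ 0) (hτ : 0 < τ.im) (ht : 0 ≤ t) :
    ‖periodArg τ t ^ (e : ℂ)‖ ≤ (t + τ.im) ^ e := by
  rw [norm_cpow_real, norm_periodArg hτ ht]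
  exact Real.rpow_le_rpow_of_nonpos (by positivity) (by linarith) he

lemma hasFDerivAt_periodArg (τ : ℂ) (t : ℝ) :
    HasFDerivAt (periodArg · t) (ContinuousLinearMap.id ℝ ℂ - (conjCLE : ℂ →L[ℝ] ℂ)) τ := by
  have h : (periodArg · t) = fun τ => I * t + (τ - conj τ) := by
    funext τ
    rw [periodArg, sub_conj]
    push_cast
    ring
  rw [h]
  exact ((hasFDerivAt_id τ).sub conjCLE.hasFDerivAt).const_add _

lemma hasDerivAt_periodArg (τ : ℂ) (t : ℝ) : HasDerivAt (periodArg τ) I t := by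
  unfold periodArg
  simpa using ((hasDerivAt_id t).ofReal_comp.add_const (2 * (τ.im : ℂ))).const_mul I

lemma continuous_periodArg (τ : ℂ) : Continuous (periodArg τ) := by
  unfold periodArg
  fun_prop

end periodArg

section periodIntegrand

variable (w : ℝ) (f : ℂ → ℂ)

noncomputable def periodIntegrand (τ : ℂ) (t : ℝ) : ℂ :=
  periodArg τ t ^ (-(w : ℂ)) * conj (f (τ + I * t)) * I

noncomputable def periodIntegrandFDeriv (τ : ℂ) (t : ℝ) : ℂ →L[ℝ] ℂ :=
  (-w * periodArg τ t ^ (-(w : ℂ) - 1) * conj (f (τ + I * t)) * I) •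
      (ContinuousLinearMap.id ℝ ℂ - (conjCLE : ℂ →L[ℝ] ℂ)) +
    (periodArg τ t ^ (-(w : ℂ)) * conj (deriv f (τ + I * t)) * I) • (conjCLE : ℂ →L[ℝ] ℂ)

variable {w f} {τ : ℂ} {t : ℝ}

lemma hasFDerivAt_periodIntegrand (hf : DifferentiableOn ℂ f ℍₒ) (hτ : 0 < τ.im) (ht : 0 ≤ t) :
    HasFDerivAt (periodIntegrand w f · t) (periodIntegrandFDeriv w f τ t) τ := by
  have hfz := (hf.differentiableAt (isOpen_upperHalfPlaneSet.mem_nhds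
    (add_I_mul_ofReal_mem_upperHalfPlaneSet hτ ht))).hasDerivAt
  have hpow := (hasStrictDerivAt_cpow_const (c := -(w : ℂ))
    (periodArg_mem_slitPlane hτ ht)).hasDerivAt.comp_hasFDerivAt τ (hasFDerivAt_periodArg τ t)
  have hconj := conjCLE.hasFDerivAt.comp τ
    (hfz.comp_hasFDerivAt τ ((hasFDerivAt_id τ).add_const (I * t)))
  refine ((hpow.mul hconj).mul_const I).congr_fderiv ?_
  ext v
  simp only [periodIntegrandFDeriv, Function.comp_apply, ContinuousAlgEquiv.coe_coeCLE, id_eq,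
    conjCAE_apply, neg_mul, neg_smul, smul_neg, smul_add, add_apply, smul_apply,
    ContinuousLinearMap.comp_apply, ContinuousLinearMap.id_apply, smul_eq_mul,
    ContinuousLinearEquiv.coe_coe, ContinuousAlgEquiv.coeCLE_apply, map_mul, neg_apply, sub_apply]
  ring

lemma hasDerivAt_periodIntegrand (hf : DifferentiableOn ℂ f ℍₒ) (hτ : 0 < τ.im) (ht : 0 ≤ t) :
    HasDerivAt (periodIntegrand w f τ) (-I * wirtingerBar (periodIntegrandFDeriv w f τ t)) t := by
  have hfz := (hf.differentiableAt (isOpen_upperHalfPlaneSet.mem_nhds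
    (add_I_mul_ofReal_mem_upperHalfPlaneSet hτ ht))).hasDerivAt
  have hpow := (hasStrictDerivAt_cpow_const (c := -(w : ℂ))
    (periodArg_mem_slitPlane hτ ht)).hasDerivAt.comp t (hasDerivAt_periodArg τ t)
  have hconj := (hfz.comp t (((hasDerivAt_id t).ofReal_comp.const_mul I).const_add τ)).star
  refine ((hpow.mul hconj).mul_const I).congr_deriv ?_
  simp only [periodIntegrandFDeriv, wirtingerBar_apply, neg_mul, id_eq, Function.comp_apply,
    RCLike.star_def, ofReal_one, mul_one, star_mul', conj_I, mul_neg, one_div, add_apply,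
    smul_apply, sub_apply, ContinuousLinearMap.id_apply, ContinuousLinearEquiv.coe_coe,
    ContinuousAlgEquiv.coeCLE_apply, conjCAE_apply, map_one, sub_self, smul_eq_mul, mul_zero,
    zero_add, sub_neg_eq_add]
  ring_nf
  simp only [I_sq, I_pow_four]
  ring

end periodIntegrand

section bounds

variable {w : ℝ} {f : ℂ → ℂ} {τ : ℂ}

lemma continuousOn_comp_add_I_mul {g : ℂ → ℂ} (hg : ContinuousOn g ℍₒ) (hτ : 0 < τ.im) :
    ContinuousOn (fun t : ℝ => g (τ + I * t)) (Ici 0) :=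
  hg.comp (by fun_prop) fun _ ht => add_I_mul_ofReal_mem_upperHalfPlaneSet hτ ht

lemma continuousOn_periodArg_cpow (c : ℂ) (hτ : 0 < τ.im) :
    ContinuousOn (fun t => periodArg τ t ^ c) (Ici 0) :=
  (continuous_periodArg τ).continuousOn.cpow_const fun _ ht => periodArg_mem_slitPlane hτ ht

lemma continuousOn_periodIntegrand (hf : ContinuousOn f ℍₒ) (hτ : 0 < τ.im) :
    ContinuousOn (periodIntegrand w f τ) (Ici 0) :=
  ((continuousOn_periodArg_cpow _ hτ).mul
    (continuous_conj.comp_continuousOn (continuousOn_comp_add_I_mul hf hτ))).mul continuousOn_const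

lemma continuousOn_periodIntegrandFDeriv (hf : DifferentiableOn ℂ f ℍₒ) (hτ : 0 < τ.im) :
    ContinuousOn (periodIntegrandFDeriv w f τ) (Ici 0) := by
  have hu₁ := continuousOn_periodArg_cpow (-(w : ℂ) - 1) hτ
  have hu₀ := continuousOn_periodArg_cpow (-(w : ℂ)) hτ
  have hfz := continuous_conj.comp_continuousOn (continuousOn_comp_add_I_mul hf.continuousOn hτ)
  have hf'z := continuous_conj.comp_continuousOn (continuousOn_comp_add_I_mul
    (hf.analyticOnNhd isOpen_upperHalfPlaneSet).deriv.continuousOn hτ)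
  unfold periodIntegrandFDeriv
  fun_prop

lemma norm_comp_add_I_mul_le {C p : ℝ} (hfC : ∀ z : ℂ, 0 < z.im → ‖f z‖ ≤ C * z.im ^ p)
    (hτ : 0 < τ.im) {t : ℝ} (ht : 0 ≤ t) : ‖f (τ + I * t)‖ ≤ C * (t + τ.im) ^ p := by
  rw [add_comm t, ← im_add_I_mul_ofReal]
  exact hfC _ (add_I_mul_ofReal_mem_upperHalfPlaneSet hτ ht)

lemma norm_periodIntegrand_le {C p : ℝ} (hw : 0 ≤ w)
    (hfC : ∀ z : ℂ, 0 < z.im → ‖f z‖ ≤ C * z.im ^ p) (hτ : 0 < τ.im) {t : ℝ} (ht : 0 ≤ t) :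
    ‖periodIntegrand w f τ t‖ ≤ C * (t + τ.im) ^ (p - w) := by
  have hs : 0 < t + τ.im := by positivity
  have hz := norm_comp_add_I_mul_le hfC hτ ht
  have hu := norm_periodArg_cpow_le (e := -w) (by linarith) hτ ht
  push_cast at hu
  calc ‖periodIntegrand w f τ t‖ = ‖periodArg τ t ^ (-(w : ℂ))‖ * ‖f (τ + I * t)‖ := by
        simp [periodIntegrand]
    _ ≤ (t + τ.im) ^ (-w) * (C * (t + τ.im) ^ p) := by gcongr
    _ = C * (t + τ.im) ^ (p - w) := by
        rw [sub_eq_add_neg, Real.rpow_add hs]; ring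

lemma norm_periodIntegrandFDeriv_le {C C' p : ℝ} (hw : 0 ≤ w)
    (hfC : ∀ z : ℂ, 0 < z.im → ‖f z‖ ≤ C * z.im ^ p)
    (hf'C : ∀ z : ℂ, 0 < z.im → ‖deriv f z‖ ≤ C' * z.im ^ (p - 1))
    (hτ : 0 < τ.im) {t : ℝ} (ht : 0 ≤ t) :
    ‖periodIntegrandFDeriv w f τ t‖ ≤ (2 * w * C + C') * (t + τ.im) ^ (p - w - 1) := by
  have hC := nonneg_of_norm_le_mul_im_rpow hfC
  set s := t + τ.im
  have hs : 0 < s := by positivity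
  have hfz := norm_comp_add_I_mul_le hfC hτ ht
  have hf'z := norm_comp_add_I_mul_le hf'C hτ ht
  have hu₁ : ‖periodArg τ t ^ (-(w : ℂ) - 1)‖ ≤ s ^ (-w - 1) := by
    simpa using norm_periodArg_cpow_le (e := -w - 1) (by linarith) hτ ht
  have hu₀ : ‖periodArg τ t ^ (-(w : ℂ))‖ ≤ s ^ (-w) := by
    simpa using norm_periodArg_cpow_le (e := -w) (by linarith) hτ ht
  have hid : ‖ContinuousLinearMap.id ℝ ℂ - (conjCLE : ℂ →L[ℝ] ℂ)‖ ≤ 2 :=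
    (norm_sub_le _ _).trans <| by
      linarith [ContinuousLinearMap.norm_id_le (𝕜 := ℝ) (E := ℂ), conjCLE_norm]
  have e₁ : s ^ (p - w - 1) = s ^ (-w - 1) * s ^ p := by rw [← Real.rpow_add hs]; ring_nf
  have e₂ : s ^ (p - w - 1) = s ^ (-w) * s ^ (p - 1) := by rw [← Real.rpow_add hs]; ring_nf
  calc ‖periodIntegrandFDeriv w f τ t‖
      ≤ w * ‖periodArg τ t ^ (-(w : ℂ) - 1)‖ * ‖f (τ + I * t)‖ *
          ‖ContinuousLinearMap.id ℝ ℂ - (conjCLE : ℂ →L[ℝ] ℂ)‖ +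
        ‖periodArg τ t ^ (-(w : ℂ))‖ * ‖deriv f (τ + I * t)‖ * ‖(conjCLE : ℂ →L[ℝ] ℂ)‖ := by
        refine (norm_add_le _ _).trans_eq ?_
        simp [norm_smul, abs_of_nonneg hw]
    _ ≤ w * s ^ (-w - 1) * (C * s ^ p) * 2 + s ^ (-w) * (C' * s ^ (p - 1)) * 1 := by
        rw [conjCLE_norm]; gcongr
    _ = (2 * w * C + C') * s ^ (p - w - 1) := by
        linear_combination (-2 * w * C) * e₁ - C' * e₂

end bounds

lemma integrableOn_Ioi_of_norm_le_rpow {E : Type*} [NormedAddCommGroup E] {g : ℝ → E}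
    {K β e : ℝ} (hg : ContinuousOn g (Ici 0)) (hβ : 0 < β) (he : e < -1)
    (hbound : ∀ t, 0 ≤ t → ‖g t‖ ≤ K * (t + β) ^ e) : IntegrableOn g (Ioi 0) :=
  ((integrableOn_add_rpow_Ioi_of_lt he (by linarith)).const_mul K).mono'
    ((hg.mono Ioi_subset_Ici_self).aestronglyMeasurable measurableSet_Ioi)
    ((ae_restrict_mem measurableSet_Ioi).mono fun t (ht : 0 < t) => hbound t ht.le)

section integral

variable {w C p : ℝ} {f : ℂ → ℂ} {τ : ℂ}

lemma integrableOn_periodIntegrand (hw : 0 ≤ w) (hpw : p < w - 1) (hf : ContinuousOn f ℍₒ)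
    (hfC : ∀ z : ℂ, 0 < z.im → ‖f z‖ ≤ C * z.im ^ p) (hτ : 0 < τ.im) :
    IntegrableOn (periodIntegrand w f τ) (Ioi 0) :=
  integrableOn_Ioi_of_norm_le_rpow (continuousOn_periodIntegrand hf hτ) hτ (by linarith)
    fun _ ht => norm_periodIntegrand_le hw hfC hτ ht

lemma integrableOn_periodIntegrandFDeriv (hw : 0 ≤ w) (hpw : p < w - 1)
    (hf : DifferentiableOn ℂ f ℍₒ) (hfC : ∀ z : ℂ, 0 < z.im → ‖f z‖ ≤ C * z.im ^ p)
    (hτ : 0 < τ.im) : IntegrableOn (periodIntegrandFDeriv w f τ) (Ioi 0) :=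
  integrableOn_Ioi_of_norm_le_rpow (continuousOn_periodIntegrandFDeriv hf hτ) hτ (by linarith)
    fun _ ht => norm_periodIntegrandFDeriv_le hw hfC
      (fun _ hz => norm_deriv_le_mul_im_rpow hf hfC hz) hτ ht

lemma hasFDerivAt_integral_periodIntegrand (hw : 0 ≤ w) (hpw : p < w - 1)
    (hf : DifferentiableOn ℂ f ℍₒ) (hfC : ∀ z : ℂ, 0 < z.im → ‖f z‖ ≤ C * z.im ^ p)
    (hτ : 0 < τ.im) :
    HasFDerivAt (fun τ => ∫ t in Ioi 0, periodIntegrand w f τ t)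
      (∫ t in Ioi 0, periodIntegrandFDeriv w f τ t) τ := by
  set C' := 2 * ((1 / 2) ^ p + (3 / 2) ^ p) * C
  have hf'C : ∀ z : ℂ, 0 < z.im → ‖deriv f z‖ ≤ C' * z.im ^ (p - 1) :=
    fun _ hz => norm_deriv_le_mul_im_rpow hf hfC hz
  have hC' : 0 ≤ 2 * w * C + C' := by
    have := nonneg_of_norm_le_mul_im_rpow hfC
    have := nonneg_of_norm_le_mul_im_rpow hf'C
    positivity
  have hball : ∀ x ∈ ball τ (τ.im / 2), τ.im / 2 < x.im := by
    intro x hx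
    have := (abs_im_le_norm (x - τ)).trans_lt (mem_ball_iff_norm.1 hx)
    rw [sub_im, abs_lt] at this
    linarith
  refine hasFDerivAt_integral_of_dominated_of_fderiv_le (ball_mem_nhds τ (half_pos hτ))
    (bound := fun t => (2 * w * C + C') * (t + τ.im / 2) ^ (p - w - 1)) ?_
    (integrableOn_periodIntegrand hw hpw hf.continuousOn hfC hτ)
    (((continuousOn_periodIntegrandFDeriv hf hτ).mono Ioi_subset_Ici_self).aestronglyMeasurable
      measurableSet_Ioi) ?_
    ((integrableOn_add_rpow_Ioi_of_lt (by linarith) (by linarith)).const_mul _) ?_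
  · filter_upwards [isOpen_upperHalfPlaneSet.mem_nhds hτ] with x hx
    exact ((continuousOn_periodIntegrand hf.continuousOn hx).mono
      Ioi_subset_Ici_self).aestronglyMeasurable measurableSet_Ioi
  · filter_upwards [ae_restrict_mem measurableSet_Ioi] with t (ht : 0 < t) x hx
    have hx' := hball x hx
    calc ‖periodIntegrandFDeriv w f x t‖ ≤ (2 * w * C + C') * (t + x.im) ^ (p - w - 1) :=
          norm_periodIntegrandFDeriv_le hw hfC hf'C (by linarith) ht.le
      _ ≤ (2 * w * C + C') * (t + τ.im / 2) ^ (p - w - 1) :=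
          mul_le_mul_of_nonneg_left
            (Real.rpow_le_rpow_of_nonpos (by positivity) (by linarith) (by linarith)) hC'
  · filter_upwards [ae_restrict_mem measurableSet_Ioi] with t (ht : 0 < t) x hx
    exact hasFDerivAt_periodIntegrand hf (by linarith [hball x hx]) ht.le

lemma wirtingerBar_integral_periodIntegrandFDeriv (hw : 0 ≤ w) (hpw : p < w - 1)
    (hf : DifferentiableOn ℂ f ℍₒ) (hfC : ∀ z : ℂ, 0 < z.im → ‖f z‖ ≤ C * z.im ^ p)
    (hτ : 0 < τ.im) :
    wirtingerBar (∫ t in Ioi 0, periodIntegrandFDeriv w f τ t) =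
      (2 * I * τ.im) ^ (-(w : ℂ)) * conj (f τ) := by
  have hint := integrableOn_periodIntegrandFDeriv hw hpw hf hfC hτ
  have hlim : Tendsto (periodIntegrand w f τ) atTop (𝓝 0) := by
    have h := ((tendsto_rpow_neg_atTop (by linarith : 0 < w - p)).comp
      (tendsto_atTop_add_const_right _ τ.im tendsto_id)).const_mul C
    rw [mul_zero] at h
    refine squeeze_zero_norm' ?_ h
    filter_upwards [eventually_ge_atTop 0] with t ht
    simpa using norm_periodIntegrand_le hw hfC hτ ht
  have hftc := integral_Ioi_of_hasDerivAt_of_tendsto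
    (continuousOn_periodIntegrand hf.continuousOn hτ 0 self_mem_Ici)
    (fun t ht => hasDerivAt_periodIntegrand hf hτ (le_of_lt ht))
    ((wirtingerBar.integrable_comp hint).const_mul _) hlim
  rw [integral_const_mul, wirtingerBar.integral_comp_comm hint] at hftc
  simp only [neg_mul, periodIntegrand, periodArg, ofReal_zero, zero_add, mul_zero, add_zero,
    zero_sub, neg_inj] at hftc
  rw [show I * (2 * (τ.im : ℂ)) = 2 * I * τ.im by ring] at hftc
  exact mul_left_cancel₀ I_ne_zero (hftc.trans (mul_comm _ _))

end integral

/-- Let `w > 0` and let `f` be holomorphic on the upper half-plane with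
`(Im τ)^((2-w)/2) · |f(τ)|` bounded.  Define the non-holomorphic period integral
`G(τ) = (4i)^(w-1) ∫₀^∞ (i(t+2y))^(-w) · conj(f(τ+it)) · i dt` (i.e. the integral
`(4i)^(w-1) ∫_{-τ̄}^∞ (z+τ)^(-w) conj(f(-z̄)) dz` along the vertical path `z = -τ̄+it`).
Then for every `τ ∈ ℍ` the integrand is integrable on `(0,∞)`, `G` is real-differentiable,
its Wirtinger derivative `∂G/∂τ̄ = ½(∂/∂x + i∂/∂y)G` equals
`(4i)^(w-1)·(2i·Im τ)^(-w)·conj(f(τ))`, and the same holds for the completion `h + G` of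
any holomorphic `h` on the upper half-plane. -/
theorem stmt_6 (w : ℝ) (hw : 0 < w) (f : ℂ → ℂ)
    (hf : DifferentiableOn ℂ f {z : ℂ | 0 < z.im})
    (C : ℝ)
    (hbound : ∀ τ : ℂ, 0 < τ.im → τ.im ^ ((2 - w) / 2) * ‖f τ‖ ≤ C)
    (G : ℂ → ℂ)
    (hG : ∀ τ : ℂ, G τ = (4 * Complex.I) ^ ((w : ℂ) - 1) *
      ∫ t in Set.Ioi (0 : ℝ),
        (Complex.I * ((t : ℂ) + 2 * τ.im)) ^ (-(w : ℂ)) *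
          (starRingEnd ℂ) (f (τ + Complex.I * t)) * Complex.I) :
    (∀ τ : ℂ, 0 < τ.im → MeasureTheory.IntegrableOn
        (fun t : ℝ => (Complex.I * ((t : ℂ) + 2 * τ.im)) ^ (-(w : ℂ)) *
          (starRingEnd ℂ) (f (τ + Complex.I * t)) * Complex.I) (Set.Ioi 0)) ∧
    (∀ τ : ℂ, 0 < τ.im → DifferentiableAt ℝ G τ) ∧
    (∀ τ : ℂ, 0 < τ.im →
      (1 / 2 : ℂ) * (fderiv ℝ G τ 1 + Complex.I * fderiv ℝ G τ Complex.I) =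
        (4 * Complex.I) ^ ((w : ℂ) - 1) * (2 * Complex.I * τ.im) ^ (-(w : ℂ)) *
          (starRingEnd ℂ) (f τ)) ∧
    (∀ h : ℂ → ℂ, DifferentiableOn ℂ h {z : ℂ | 0 < z.im} → ∀ τ : ℂ, 0 < τ.im →
      (1 / 2 : ℂ) * (fderiv ℝ (fun s => h s + G s) τ 1 +
          Complex.I * fderiv ℝ (fun s => h s + G s) τ Complex.I) =
        (4 * Complex.I) ^ ((w : ℂ) - 1) * (2 * Complex.I * τ.im) ^ (-(w : ℂ)) *
          (starRingEnd ℂ) (f τ)) := by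
  set c : ℂ := (4 * I) ^ ((w : ℂ) - 1)
  have hfC : ∀ z : ℂ, 0 < z.im → ‖f z‖ ≤ C * z.im ^ (-((2 - w) / 2)) :=
    fun z hz => norm_le_mul_rpow_neg_of_rpow_mul_norm_le hz (hbound z hz)
  have hpw : -((2 - w) / 2) < w - 1 := by linarith
  have hG' : ∀ τ : ℂ, 0 < τ.im →
      HasFDerivAt G (c • ∫ t in Ioi 0, periodIntegrandFDeriv w f τ t) τ := fun τ hτ => by
    rw [show G = fun τ => c * ∫ t in Ioi 0, periodIntegrand w f τ t from funext hG]
    exact (hasFDerivAt_integral_periodIntegrand hw.le hpw hf hfC hτ).const_mul c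
  have hwirt : ∀ τ : ℂ, 0 < τ.im →
      wirtingerBar (fderiv ℝ G τ) = c * (2 * I * τ.im) ^ (-(w : ℂ)) * conj (f τ) :=
    fun τ hτ => by
      rw [(hG' τ hτ).fderiv, wirtingerBar_smul, mul_assoc,
        wirtingerBar_integral_periodIntegrandFDeriv hw.le hpw hf hfC hτ]
  refine ⟨fun τ hτ => integrableOn_periodIntegrand hw.le hpw hf.continuousOn hfC hτ,
    fun τ hτ => (hG' τ hτ).differentiableAt, hwirt, fun h hh τ hτ => ?_⟩
  have hh' : HasFDerivAt h ((fderiv ℂ h τ).restrictScalars ℝ) τ :=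
    (hh.differentiableAt (isOpen_upperHalfPlaneSet.mem_nhds hτ)).hasFDerivAt.restrictScalars ℝ
  rw [← wirtingerBar_apply, (hh'.fun_add (hG' τ hτ)).fderiv, map_add, wirtingerBar_restrictScalars,
    zero_add, ← (hG' τ hτ).fderiv, hwirt τ hτ]
end
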